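/- (Completeness direction of the PARTITION reduction, abstract form) Let a₁,…,a_n be positive integers with ∑ aᵢ = 2L. There exists a subset I ⊆ {1,…,n} with ∑_{i∈I} aᵢ = L if and only if the edges e_i (of length a_i) and e'_i (of length 0) can be oriented so that there exist two edge-disjoint directed paths from v₁ to v_{n+1} and from v_{n+1} to v₁, each of total length exactly L, where for each i exactly one of {e_i, e'_i} is used in each direction. -/

import Mathlib

theorem Finset.sum_compl_eq_of_sum_eq {ι M : Type*} [Fintype ι] [DecidableEq ι]
    [AddCancelCommMonoid M] {a : ι → M} {I : Finset ι} {L : M}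
    (hsum : ∑ i, a i = L + L) (hI : ∑ i ∈ I, a i = L) : ∑ i ∈ Iᶜ, a i = L := by
  have h := sum_add_sum_compl I a
  rw [hI, hsum] at h
  exact add_left_cancel h

theorem Finset.filter_decide_mem_eq_true {ι : Type*} [Fintype ι] [DecidableEq ι]
    (I : Finset ι) : univ.filter (fun i => decide (i ∈ I) = true) = I := by
  ext; simp

theorem Finset.filter_decide_mem_eq_false {ι : Type*} [Fintype ι] [DecidableEq ι]
    (I : Finset ι) : univ.filter (fun i => decide (i ∈ I) = false) = Iᶜ := by
  ext; simp

open Finset in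
theorem partition_iff_orientation_general (n : ℕ) (a : Fin n → ℕ) (L : ℕ)
    (hsum : ∑ i, a i = 2 * L) :
    (∃ I : Finset (Fin n), ∑ i ∈ I, a i = L) ↔
      (∃ σ : Fin n → Bool,
        (∑ i ∈ Finset.univ.filter (fun i => σ i = true), a i = L) ∧
        (∑ i ∈ Finset.univ.filter (fun i => σ i = false), a i = L)) := by
  constructor
  · rintro ⟨I, hI⟩
    refine ⟨fun i => decide (i ∈ I), ?_, ?_⟩
    · rwa [filter_decide_mem_eq_true]
    · rw [filter_decide_mem_eq_false]
      exact sum_compl_eq_of_sum_eq (two_mul L ▸ hsum) hI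
  · rintro ⟨σ, hforward, -⟩
    exact ⟨_, hforward⟩

open Finset in
/-- PARTITION reduction, abstract form: a subset summing to `L` exists iff the
parallel edges can be oriented (via `σ`) so that the forward and backward paths
both have length exactly `L`. -/
theorem partition_iff_orientation (n : ℕ) (a : Fin n → ℕ) (L : ℕ)
    (hpos : ∀ i, 0 < a i) (hsum : ∑ i, a i = 2 * L) :
    (∃ I : Finset (Fin n), ∑ i ∈ I, a i = L) ↔
      (∃ σ : Fin n → Bool,
        (∑ i ∈ Finset.univ.filter (fun i => σ i = true), a i = L) ∧
        (∑ i ∈ Finset.univ.filter (fun i => σ i = false), a i = L)) :=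
  partition_iff_orientation_general n a L hsum
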